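/- Let n ≥ 3 and let P be an odd, harmonic, homogeneous polynomial of degree l ≥ 3 on ℝ^n, and for r,s ∈ {1,…,n} set P_{rs} := (l(l−1))^{−1} ∂_r∂_s P. Then for every r,s ∈ {1,…,n} and every x ∈ ℝ^n \ {0}: −((n+l−3)(n+l−5))^{−1} Δ[ ∂_r( P_{rs}(x) |x|^{−(n+l−5)} ) ] = (l−1)(n+l−3)^{−1} ∂_r( P_{rs}(x) |x|^{−(n+l−3)} ), where Δ is the Laplacian in the variable x. -/

import Mathlib

/-!
Write `ρ = ‖x‖²`. For a polynomial `p`, every partial derivative of `p ρ^s` is again of this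
form: `∂ⱼ (p ρ^s) = (ρ ∂ⱼp + 2s xⱼ p) ρ^(s-1)`. Iterating, `Δ (p ρ^s)` is `ρ^(s-2)` times an
explicit polynomial built from `Δp`, the Euler operator and `ρ`. For `Q = P_rs`, which is
harmonic and homogeneous of degree `d = l - 2`, Euler's identity turns this into
`Δ ∂ᵣ (Q ρ^t) = 2t (2d + n + 2t - 2) ∂ᵣ (Q ρ^(t-1))` away from the origin, an identity
between polynomials. With `2t = -(n + l - 5)` the constant is `-(n + l - 5)(l - 1)`.
-/

open MeasureTheory Metric Set Filter
open scoped ENNReal NNReal Topology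

noncomputable section

abbrev En (n : ℕ) : Type := EuclideanSpace ℝ (Fin n)

/-- P is odd: P(−x) = −P(x) for all x. -/
def IsOddPoly (n : ℕ) (P : MvPolynomial (Fin n) ℝ) : Prop :=
  ∀ x : Fin n → ℝ, MvPolynomial.eval (-x) P = -MvPolynomial.eval x P

/-- P is harmonic: ΔP = 0. -/
def IsHarmonicPoly (n : ℕ) (P : MvPolynomial (Fin n) ℝ) : Prop :=
  ∑ j : Fin n, MvPolynomial.pderiv j (MvPolynomial.pderiv j P) = 0

/-- The partial derivative ∂_r of a function on ℝⁿ. -/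
def partialDer (n : ℕ) (r : Fin n) (f : En n → ℝ) : En n → ℝ :=
  fun x => fderiv ℝ f x (EuclideanSpace.single r 1)

/-- The Laplacian Δ = Σ_j ∂_j² of a function on ℝⁿ. -/
def laplacianFun (n : ℕ) (f : En n → ℝ) : En n → ℝ :=
  fun x => ∑ j : Fin n, partialDer n j (partialDer n j f) x

namespace MvPolynomial

variable {σ R : Type*} [CommRing R]

theorem pderiv_comm (i j : σ) (p : MvPolynomial σ R) :
    pderiv i (pderiv j p) = pderiv j (pderiv i p) := by
  have h : ⁅pderiv (R := R) i, pderiv (R := R) j⁆ = 0 := by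
    classical
    refine derivation_ext fun k => ?_
    simp [Derivation.commutator_apply, pderiv_X, Pi.single_apply, apply_ite (pderiv _)]
  have := DFunLike.congr_fun h p
  rwa [Derivation.commutator_apply, Derivation.zero_apply, sub_eq_zero] at this

theorem pderiv_X_mul [DecidableEq σ] (i j : σ) (p : MvPolynomial σ R) :
    pderiv i (X j * p) = X j * pderiv i p + if j = i then p else 0 := by
  simp [pderiv_X, Pi.single_apply, add_comm]

variable [Fintype σ]

noncomputable def laplacian (p : MvPolynomial σ R) : MvPolynomial σ R :=
  ∑ i, pderiv i (pderiv i p)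

noncomputable def euler (p : MvPolynomial σ R) : MvPolynomial σ R :=
  ∑ i, X i * pderiv i p

noncomputable def normSq : MvPolynomial σ R := ∑ i, X i ^ 2

theorem pderiv_normSq (j : σ) : pderiv j (normSq : MvPolynomial σ R) = 2 * X j := by
  classical
  simp [normSq, pderiv_X, Pi.single_apply]

theorem sum_X_mul_X_mul (p : MvPolynomial σ R) : ∑ i, X i * (X i * p) = normSq * p := by
  simp only [normSq, Finset.sum_mul, ← mul_assoc, sq]

theorem laplacian_add (p q : MvPolynomial σ R) :
    laplacian (p + q) = laplacian p + laplacian q := by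
  simp only [laplacian, map_add, Finset.sum_add_distrib]

theorem laplacian_C_mul (c : R) (p : MvPolynomial σ R) :
    laplacian (C c * p) = C c * laplacian p := by
  simp only [laplacian, pderiv_C_mul, Finset.mul_sum]

theorem euler_add (p q : MvPolynomial σ R) : euler (p + q) = euler p + euler q := by
  simp only [euler, map_add, mul_add, Finset.sum_add_distrib]

theorem euler_C_mul (c : R) (p : MvPolynomial σ R) : euler (C c * p) = C c * euler p := by
  simp only [euler, pderiv_C_mul, Finset.mul_sum, mul_left_comm]

theorem laplacian_pderiv (j : σ) (p : MvPolynomial σ R) :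
    laplacian (pderiv j p) = pderiv j (laplacian p) := by
  simp only [laplacian, map_sum, pderiv_comm _ j]

theorem euler_pderiv (j : σ) (p : MvPolynomial σ R) :
    euler (pderiv j p) = pderiv j (euler p) - pderiv j p := by
  classical
  simp only [euler, map_sum, pderiv_X_mul, pderiv_comm j, Finset.sum_add_distrib,
    Finset.sum_ite_eq', Finset.mem_univ, if_true, add_sub_cancel_right]

theorem laplacian_X_mul (j : σ) (p : MvPolynomial σ R) :
    laplacian (X j * p) = 2 * pderiv j p + X j * laplacian p := by
  classical
  simp only [laplacian, pderiv_X_mul, map_add, apply_ite (pderiv _), map_zero,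
    Finset.sum_add_distrib, Finset.sum_ite_eq, Finset.mem_univ, if_true, Finset.mul_sum]
  ring

theorem euler_X_mul (j : σ) (p : MvPolynomial σ R) :
    euler (X j * p) = X j * p + X j * euler p := by
  classical
  simp only [euler, pderiv_X_mul, mul_add, Finset.sum_add_distrib, Finset.mul_sum, mul_ite,
    mul_zero, Finset.sum_ite_eq, Finset.mem_univ, if_true, mul_left_comm (X _) (X j)]
  ring

theorem pderiv_normSq_mul (j : σ) (p : MvPolynomial σ R) :
    pderiv j (normSq * p) = 2 * (X j * p) + normSq * pderiv j p := by
  rw [Derivation.leibniz, pderiv_normSq, smul_eq_mul, smul_eq_mul]; ring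

theorem laplacian_normSq_mul (p : MvPolynomial σ R) :
    laplacian (normSq * p) =
      (2 * Fintype.card σ : MvPolynomial σ R) * p + 4 * euler p + normSq * laplacian p := by
  have h : ∀ i, pderiv i (pderiv i (normSq * p)) =
      2 * p + 4 * (X i * pderiv i p) + normSq * pderiv i (pderiv i p) := fun i => by
    classical
    simp only [pderiv_normSq_mul, map_add, two_mul, pderiv_X_mul, if_true]
    ring
  simp only [laplacian, euler, h, Finset.sum_add_distrib, Finset.mul_sum, Finset.sum_const,
    Finset.card_univ, nsmul_eq_mul]
  ring

theorem euler_normSq_mul (p : MvPolynomial σ R) :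
    euler (normSq * p) = 2 * normSq * p + normSq * euler p := by
  have h : ∀ i, X i * pderiv i (normSq * p) =
      2 * (X i * (X i * p)) + normSq * (X i * pderiv i p) := fun i => by
    rw [pderiv_normSq_mul]; ring
  simp only [euler, h, Finset.sum_add_distrib, ← Finset.mul_sum, sum_X_mul_X_mul]
  ring

/-- `∂ⱼ (p ‖x‖^(2s)) = radialPDeriv s j p · ‖x‖^(2(s-1))`. -/
noncomputable def radialPDeriv (s : R) (j : σ) (p : MvPolynomial σ R) : MvPolynomial σ R :=
  normSq * pderiv j p + C (2 * s) * (X j * p)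

/-- `Δ (p ‖x‖^(2s)) = radialLaplacian s p · ‖x‖^(2(s-2))`. -/
noncomputable def radialLaplacian (s : R) (p : MvPolynomial σ R) : MvPolynomial σ R :=
  normSq ^ 2 * laplacian p +
    C (2 * s) * normSq * (2 * euler p + ((Fintype.card σ : MvPolynomial σ R) + C (2 * s) - 2) * p)

theorem sum_radialPDeriv_radialPDeriv (s : R) (p : MvPolynomial σ R) :
    ∑ j, radialPDeriv (s - 1) j (radialPDeriv s j p) = radialLaplacian s p := by
  classical
  have h : ∀ j, radialPDeriv (s - 1) j (radialPDeriv s j p) =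
      normSq ^ 2 * pderiv j (pderiv j p) + 4 * C s * normSq * (X j * pderiv j p) +
        2 * C s * normSq * p + 4 * C s * (C s - 1) * (X j * (X j * p)) := fun j => by
    simp only [radialPDeriv, map_add, pderiv_normSq_mul, pderiv_C_mul]
    simp only [pderiv_X_mul, if_true, map_mul, map_sub, map_one, map_ofNat]
    ring
  simp only [h, Finset.sum_add_distrib, ← Finset.mul_sum, Finset.sum_const, Finset.card_univ,
    nsmul_eq_mul, sum_X_mul_X_mul, radialLaplacian, laplacian, euler, map_mul, map_ofNat]
  ring

variable {q : MvPolynomial σ R} {d : ℕ}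

theorem euler_pderiv_of_isHomogeneous (hq : q.IsHomogeneous d) (r : σ) :
    euler (pderiv r q) = (d - 1) * pderiv r q := by
  rw [euler_pderiv, euler, hq.sum_X_mul_pderiv, map_nsmul, nsmul_eq_mul]
  ring

theorem laplacian_radialPDeriv (hq : q.IsHomogeneous d) (hΔ : laplacian q = 0) (s : R) (r : σ) :
    laplacian (radialPDeriv s r q) =
      (2 * (Fintype.card σ : MvPolynomial σ R) + 4 * (d : MvPolynomial σ R) - 4 + 4 * C s) *
        pderiv r q := by
  rw [radialPDeriv, laplacian_add, laplacian_C_mul, laplacian_normSq_mul, laplacian_X_mul,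
    laplacian_pderiv, hΔ, euler_pderiv_of_isHomogeneous hq]
  simp only [map_zero, mul_zero, add_zero, map_mul, map_ofNat]
  ring

theorem euler_radialPDeriv (hq : q.IsHomogeneous d) (s : R) (r : σ) :
    euler (radialPDeriv s r q) = ((d : MvPolynomial σ R) + 1) * radialPDeriv s r q := by
  rw [radialPDeriv, euler_add, euler_C_mul, euler_normSq_mul, euler_X_mul,
    euler_pderiv_of_isHomogeneous hq, euler, hq.sum_X_mul_pderiv, nsmul_eq_mul]
  ring

theorem radialLaplacian_radialPDeriv (hq : q.IsHomogeneous d) (hΔ : laplacian q = 0) (t : R)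
    (r : σ) :
    radialLaplacian (t - 1) (radialPDeriv t r q) =
      C (2 * t * (2 * d + Fintype.card σ + 2 * t - 2)) * normSq * radialPDeriv (t - 1) r q := by
  rw [radialLaplacian, laplacian_radialPDeriv hq hΔ, euler_radialPDeriv hq, radialPDeriv,
    radialPDeriv]
  simp only [map_mul, map_sub, map_add, map_one, map_ofNat, map_natCast]
  ring

end MvPolynomial

open MvPolynomial

theorem MvPolynomial.hasFDerivAt_eval_comp {𝕜 E σ : Type*} [NontriviallyNormedField 𝕜]
    [NormedAddCommGroup E] [NormedSpace 𝕜 E] [Fintype σ]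
    (ℓ : σ → E →L[𝕜] 𝕜) (p : MvPolynomial σ 𝕜) (x : E) :
    HasFDerivAt (fun y => eval (fun i => ℓ i y) p)
      (∑ i, eval (fun i => ℓ i x) (pderiv i p) • ℓ i) x := by
  classical
  induction p using MvPolynomial.induction_on with
  | C a =>
    simp only [eval_C]
    refine (hasFDerivAt_const (𝕜 := 𝕜) a x).congr_fderiv (ContinuousLinearMap.ext fun v => ?_)
    simp
  | add p q hp hq =>
    simp only [map_add]
    refine (hp.add hq).congr_fderiv (ContinuousLinearMap.ext fun v => ?_)
    simp [add_mul, Finset.sum_add_distrib]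
  | mul_X p i hp =>
    have hfun : (fun y => eval (fun i => ℓ i y) (p * X i)) =
        fun y => eval (fun i => ℓ i y) p * ℓ i y := by
      ext y; simp
    rw [hfun]
    refine (hp.mul (ℓ i).hasFDerivAt).congr_fderiv (ContinuousLinearMap.ext fun v => ?_)
    simp only [mul_comm p, pderiv_X_mul]
    simp [add_mul, Finset.sum_add_distrib, apply_ite (eval _), ite_mul, add_comm, Finset.mul_sum,
      mul_assoc]

section Analytic

variable {n : ℕ}

def polyMulNormSqRpow (p : MvPolynomial (Fin n) ℝ) (s : ℝ) : En n → ℝ :=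
  fun y => eval (fun i => y i) p * (‖y‖ ^ 2) ^ s

theorem eval_normSq (y : En n) : eval (fun i => y i) normSq = ‖y‖ ^ 2 := by
  simp [normSq, EuclideanSpace.norm_sq_eq]

theorem polyMulNormSqRpow_neg_half (p : MvPolynomial (Fin n) ℝ) (k : ℕ) :
    polyMulNormSqRpow p (-(k : ℝ) / 2) = fun y => eval (fun i => y i) p / ‖y‖ ^ k := by
  ext y
  rw [polyMulNormSqRpow, ← Real.rpow_natCast_mul (norm_nonneg y),
    show ((2 : ℕ) : ℝ) * (-(k : ℝ) / 2) = -k by push_cast; ring,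
    Real.rpow_neg (norm_nonneg y), Real.rpow_natCast, div_eq_mul_inv]

theorem polyMulNormSqRpow_normSq_mul (p : MvPolynomial (Fin n) ℝ) (s : ℝ) {y : En n}
    (hy : y ≠ 0) : polyMulNormSqRpow (normSq * p) s y = polyMulNormSqRpow p (s + 1) y := by
  have hρ : 0 < ‖y‖ ^ 2 := by positivity
  rw [polyMulNormSqRpow, polyMulNormSqRpow, eval_mul, eval_normSq, Real.rpow_add_one hρ.ne']
  ring

theorem polyMulNormSqRpow_C_mul (c : ℝ) (p : MvPolynomial (Fin n) ℝ) (s : ℝ) (y : En n) :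
    polyMulNormSqRpow (C c * p) s y = c * polyMulNormSqRpow p s y := by
  rw [polyMulNormSqRpow, polyMulNormSqRpow, eval_mul, eval_C, mul_assoc]

theorem sum_polyMulNormSqRpow (p : Fin n → MvPolynomial (Fin n) ℝ) (s : ℝ) (y : En n) :
    ∑ j, polyMulNormSqRpow (p j) s y = polyMulNormSqRpow (∑ j, p j) s y := by
  simp only [polyMulNormSqRpow, map_sum, Finset.sum_mul]

theorem partialDer_congr {f g : En n → ℝ} {x : En n} (h : f =ᶠ[𝓝 x] g) (r : Fin n) :
    partialDer n r f x = partialDer n r g x := by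
  rw [partialDer, partialDer, h.fderiv_eq]

theorem laplacianFun_congr {f g : En n → ℝ} {x : En n} (h : f =ᶠ[𝓝 x] g) :
    laplacianFun n f x = laplacianFun n g x :=
  Finset.sum_congr rfl fun j _ =>
    partialDer_congr (h.eventuallyEq_nhds.mono fun _ hy => partialDer_congr hy j) j

theorem partialDer_polyMulNormSqRpow (p : MvPolynomial (Fin n) ℝ) (s : ℝ) (j : Fin n)
    {x : En n} (hx : x ≠ 0) :
    partialDer n j (polyMulNormSqRpow p s) x =
      polyMulNormSqRpow (radialPDeriv s j p) (s - 1) x := by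
  have hρ : 0 < ‖x‖ ^ 2 := by positivity
  have h := (hasFDerivAt_eval_comp (fun i => EuclideanSpace.proj i) p x).fun_mul
    ((hasStrictFDerivAt_norm_sq x).hasFDerivAt.rpow_const (p := s) (Or.inl hρ.ne'))
  change fderiv ℝ (fun y => eval (fun i => EuclideanSpace.proj i y) p * (‖y‖ ^ 2) ^ s) x _ = _
  rw [h.fderiv]
  simp only [add_apply, smul_apply, sum_apply, coe_innerSL_apply, EuclideanSpace.inner_single_right,
    PiLp.proj_apply, PiLp.single_apply, Real.ringHom_apply, nsmul_eq_mul, Nat.cast_ofNat,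
    smul_eq_mul, one_mul, mul_one, mul_zero, mul_ite, Finset.sum_ite_eq', Finset.mem_univ,
    if_true, polyMulNormSqRpow, radialPDeriv, map_add, map_mul, eval_normSq, eval_C, eval_X,
    Real.rpow_sub_one hρ.ne']
  field_simp
  ring

theorem partialDer_polyMulNormSqRpow_eventuallyEq (p : MvPolynomial (Fin n) ℝ) (s : ℝ)
    (j : Fin n) {x : En n} (hx : x ≠ 0) :
    partialDer n j (polyMulNormSqRpow p s) =ᶠ[𝓝 x]
      polyMulNormSqRpow (radialPDeriv s j p) (s - 1) :=
  (eventually_ne_nhds hx).mono fun _ hy => partialDer_polyMulNormSqRpow p s j hy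

theorem laplacianFun_polyMulNormSqRpow (p : MvPolynomial (Fin n) ℝ) (s : ℝ) {x : En n}
    (hx : x ≠ 0) :
    laplacianFun n (polyMulNormSqRpow p s) x =
      polyMulNormSqRpow (radialLaplacian s p) (s - 2) x := by
  have h : ∀ j, partialDer n j (partialDer n j (polyMulNormSqRpow p s)) x =
      polyMulNormSqRpow (radialPDeriv (s - 1) j (radialPDeriv s j p)) (s - 2) x := fun j => by
    rw [partialDer_congr (partialDer_polyMulNormSqRpow_eventuallyEq p s j hx),
      partialDer_polyMulNormSqRpow _ _ _ hx, sub_sub, one_add_one_eq_two]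
  simp only [laplacianFun, h, sum_polyMulNormSqRpow, sum_radialPDeriv_radialPDeriv]

theorem laplacianFun_partialDer_polyMulNormSqRpow {q : MvPolynomial (Fin n) ℝ} {d : ℕ}
    (hq : q.IsHomogeneous d) (hΔ : laplacian q = 0) (t : ℝ) (r : Fin n) {x : En n}
    (hx : x ≠ 0) :
    laplacianFun n (partialDer n r (polyMulNormSqRpow q t)) x =
      2 * t * (2 * d + n + 2 * t - 2) * partialDer n r (polyMulNormSqRpow q (t - 1)) x := by
  rw [laplacianFun_congr (partialDer_polyMulNormSqRpow_eventuallyEq q t r hx),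
    laplacianFun_polyMulNormSqRpow _ _ hx, radialLaplacian_radialPDeriv hq hΔ,
    partialDer_polyMulNormSqRpow _ _ _ hx, mul_assoc, polyMulNormSqRpow_C_mul,
    polyMulNormSqRpow_normSq_mul _ _ hx, Fintype.card_fin, show t - 1 - 2 + 1 = t - 1 - 1 by ring]

end Analytic

theorem laplacian_identity_for_semmes_kernels_general
    (n : ℕ) (hn : 3 ≤ n) (l : ℕ) (hl : 3 ≤ l)
    (P : MvPolynomial (Fin n) ℝ)
    (hharm : IsHarmonicPoly n P) (hhom : P.IsHomogeneous l)
    (Prs : Fin n → Fin n → MvPolynomial (Fin n) ℝ)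
    (hPrs : ∀ r s, Prs r s =
      ((l : ℝ) * ((l : ℝ) - 1))⁻¹ • MvPolynomial.pderiv r (MvPolynomial.pderiv s P)) :
    ∀ (r s : Fin n), ∀ x : En n, x ≠ 0 →
      -(((n : ℝ) + l - 3) * ((n : ℝ) + l - 5))⁻¹ *
          laplacianFun n (partialDer n r
            (fun y => MvPolynomial.eval (fun i => y i) (Prs r s) / ‖y‖ ^ (n + l - 5))) x =
        (((l : ℝ) - 1) / ((n : ℝ) + l - 3)) *
          partialDer n r
            (fun y => MvPolynomial.eval (fun i => y i) (Prs r s) / ‖y‖ ^ (n + l - 3)) x := by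
  intro r s x hx
  have hhomQ : (Prs r s).IsHomogeneous (l - 2) := by
    rw [hPrs, smul_eq_C_mul, show l - 2 = 0 + (l - 1 - 1) by omega]
    exact (isHomogeneous_C _ _).mul (hhom.pderiv.pderiv)
  have hharmQ : laplacian (Prs r s) = 0 := by
    rw [hPrs, smul_eq_C_mul, laplacian_C_mul, laplacian_pderiv, laplacian_pderiv]
    rw [show laplacian P = 0 from hharm, map_zero, map_zero, mul_zero]
  have hexp : -((n + l - 3 : ℕ) : ℝ) / 2 = -((n + l - 5 : ℕ) : ℝ) / 2 - 1 := by
    rw [show n + l - 3 = n + l - 5 + 2 by omega]; push_cast; ring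
  rw [← polyMulNormSqRpow_neg_half, ← polyMulNormSqRpow_neg_half, hexp,
    laplacianFun_partialDer_polyMulNormSqRpow hhomQ hharmQ _ r hx]
  have hn' : (3 : ℝ) ≤ n := by exact_mod_cast hn
  have hl' : (3 : ℝ) ≤ l := by exact_mod_cast hl
  rw [Nat.cast_sub (by omega : 5 ≤ n + l), Nat.cast_sub (by omega : 2 ≤ l)]
  have h3 : (n : ℝ) + l - 3 ≠ 0 := by linarith
  have h5 : (n : ℝ) + l - 5 ≠ 0 := by linarith
  push_cast
  field_simp
  ring

/-- with P odd, harmonic, homogeneous of degree l ≥ 3 on ℝⁿ, n ≥ 3,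
and P_{rs} := (l(l−1))⁻¹ ∂_r∂_s P, for every r, s and every x ≠ 0 one has
−((n+l−3)(n+l−5))⁻¹ Δ[∂_r(P_{rs}(x)|x|^{−(n+l−5)})]
  = (l−1)(n+l−3)⁻¹ ∂_r(P_{rs}(x)|x|^{−(n+l−3)}). -/
theorem laplacian_identity_for_semmes_kernels
    (n : ℕ) (hn : 3 ≤ n) (l : ℕ) (hl : 3 ≤ l)
    (P : MvPolynomial (Fin n) ℝ) (hodd : IsOddPoly n P)
    (hharm : IsHarmonicPoly n P) (hhom : P.IsHomogeneous l)
    (Prs : Fin n → Fin n → MvPolynomial (Fin n) ℝ)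
    (hPrs : ∀ r s, Prs r s =
      ((l : ℝ) * ((l : ℝ) - 1))⁻¹ • MvPolynomial.pderiv r (MvPolynomial.pderiv s P)) :
    ∀ (r s : Fin n), ∀ x : En n, x ≠ 0 →
      -(((n : ℝ) + l - 3) * ((n : ℝ) + l - 5))⁻¹ *
          laplacianFun n (partialDer n r
            (fun y => MvPolynomial.eval (fun i => y i) (Prs r s) / ‖y‖ ^ (n + l - 5))) x =
        (((l : ℝ) - 1) / ((n : ℝ) + l - 3)) *
          partialDer n r
            (fun y => MvPolynomial.eval (fun i => y i) (Prs r s) / ‖y‖ ^ (n + l - 3)) x :=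
  laplacian_identity_for_semmes_kernels_general n hn l hl P hharm hhom Prs hPrs
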